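/- arXiv:2205.11361 — 3 statements merged into one kernel-verified Lean document; each statement's English description precedes it below -/
import Mathlib

section
/- For γ ∈ (0,1), the quotient (G(y) − y)/y^{1+γ} tends to 1 as y → 0⁺; in particular G(y)/y → 1 as y → 0⁺, so the Thaler map T has a neutral fixed point at y = 0 (T(0) = 0 with unit derivative from the right). -/
open Filter Topology

/-- For `γ ∈ (0,1)`, `(G(y) - y)/y^(1+γ) → 1` as `y → 0⁺`; in particular `G(y)/y → 1`
as `y → 0⁺`, so the Thaler map `T` has a neutral fixed point at `y = 0`
(`T 0 = 0` with unit derivative from the right). -/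
theorem stmt_3 (γ : ℝ) (hγ : γ ∈ Set.Ioo (0:ℝ) 1)
    (G T : ℝ → ℝ)
    (hG : ∀ y : ℝ, G y = (y ^ (1 - γ) + (1 + y) ^ (1 - γ) - 1) ^ (1 / (1 - γ)))
    (hT : ∀ y : ℝ, T y = Int.fract (G y))
    (ystar : ℝ) (hys : ystar ∈ Set.Ioo (0:ℝ) 1)
    (hys_eq : ystar ^ (1 - γ) + (1 + ystar) ^ (1 - γ) = 2) :
    Tendsto (fun y : ℝ => (G y - y) / y ^ (1 + γ)) (𝓝[>] 0) (𝓝 1) ∧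
    Tendsto (fun y : ℝ => G y / y) (𝓝[>] 0) (𝓝 1) ∧
    T 0 = 0 ∧
    HasDerivWithinAt T 1 (Set.Ioi 0) 0 := by
  obtain ⟨hγ0, hγ1⟩ := hγ
  set p : ℝ := 1 - γ with hpdef
  have hp0 : 0 < p := by simp only [hpdef]; linarith
  have hpne : p ≠ 0 := ne_of_gt hp0
  -- slope lemma for exponent q at base 1
  have slopeLim : ∀ q : ℝ, Tendsto (fun y : ℝ => ((1+y) ^ q - 1) / y) (𝓝[≠] 0) (𝓝 q) := by
    intro q
    have h1 : HasDerivAt (fun x:ℝ => 1 + x) 1 0 := (hasDerivAt_id 0).const_add 1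
    have h2 : HasDerivAt (fun x:ℝ => (1+x) ^ q) (q * (1+(0:ℝ)) ^ (q-1) * 1) 0 :=
      (Real.hasDerivAt_rpow_const (x := 1+(0:ℝ)) (p := q) (by norm_num)).comp 0 h1
    have h3 : HasDerivAt (fun x:ℝ => (1+x) ^ q) q 0 := by simpa using h2
    refine (hasDerivAt_iff_tendsto_slope.mp h3).congr (fun y => ?_)
    simp [slope_def_field, div_eq_inv_mul]
  have hsub : 𝓝[>] (0:ℝ) ≤ 𝓝[≠] (0:ℝ) :=
    nhdsWithin_mono 0 (fun x hx => ne_of_gt hx)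
  have L1 : Tendsto (fun y : ℝ => ((1+y) ^ p - 1) / y) (𝓝[>] 0) (𝓝 p) :=
    (slopeLim p).mono_left hsub
  -- y^γ → 0
  have Lγ : Tendsto (fun y : ℝ => y ^ γ) (𝓝[>] 0) (𝓝 0) := by
    have := (Real.continuousAt_rpow_const 0 γ (Or.inr hγ0.le)).continuousWithinAt
      (s := Set.Ioi (0:ℝ))
    simpa [ContinuousWithinAt, Real.zero_rpow (ne_of_gt hγ0)] using this
  -- u
  set u : ℝ → ℝ := fun y => ((1+y) ^ p - 1) / y ^ p with hu
  have hu_pos : ∀ y ∈ Set.Ioi (0:ℝ), 0 < u y := by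
    intro y hy
    have hy0 : (0:ℝ) < y := hy
    have h1y : 1 < (1+y) ^ p :=
      (Real.one_lt_rpow_iff_of_pos (by linarith)).mpr (Or.inl ⟨by linarith, hp0⟩)
    exact div_pos (by linarith) (Real.rpow_pos_of_pos hy0 p)
  have hypγ : ∀ y : ℝ, 0 < y → y ^ p * y ^ γ = y := by
    intro y hy
    rw [← Real.rpow_add hy]
    simp [hpdef]
  have hu_eq : ∀ y ∈ Set.Ioi (0:ℝ), u y = (((1+y) ^ p - 1) / y) * y ^ γ := by
    intro y hy
    have hy0 : (0:ℝ) < y := hy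
    rw [hu]
    field_simp
    rw [mul_assoc, hypγ y hy0]; ring
  have Lu : Tendsto u (𝓝[>] 0) (𝓝 0) := by
    have : Tendsto (fun y : ℝ => (((1+y) ^ p - 1) / y) * y ^ γ) (𝓝[>] 0) (𝓝 (p * 0)) :=
      L1.mul Lγ
    rw [mul_zero] at this
    exact this.congr' (eventually_nhdsWithin_of_forall (fun y hy => (hu_eq y hy).symm))
  have Lu' : Tendsto u (𝓝[>] 0) (𝓝[≠] 0) := by
    refine tendsto_nhdsWithin_iff.mpr ⟨Lu, ?_⟩
    exact eventually_nhdsWithin_of_forall (fun y hy => ne_of_gt (hu_pos y hy))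
  -- key identity: G y = y * (1 + u y)^(1/p) for y > 0
  have hG_eq : ∀ y ∈ Set.Ioi (0:ℝ), G y = y * (1 + u y) ^ (1/p) := by
    intro y hy
    have hy0 : (0:ℝ) < y := hy
    have hyp : (0:ℝ) < y ^ p := Real.rpow_pos_of_pos hy0 p
    have hinner : y ^ p + (1+y) ^ p - 1 = y ^ p * (1 + u y) := by
      rw [hu]; field_simp; ring
    rw [hG y, hinner, Real.mul_rpow (le_of_lt hyp) (by nlinarith [hu_pos y hy]),
      ← Real.rpow_mul (le_of_lt hy0), mul_one_div, div_self hpne, Real.rpow_one]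
  -- key algebraic identity for the main limit
  have key : ∀ y ∈ Set.Ioi (0:ℝ),
      (G y - y) / y ^ (1 + γ)
        = (((1 + u y) ^ (1/p) - 1) / u y) * (((1+y) ^ p - 1) / y) := by
    intro y hy
    have hy0 : (0:ℝ) < y := hy
    have hyp : (0:ℝ) < y ^ p := Real.rpow_pos_of_pos hy0 p
    have hγp : (0:ℝ) < y ^ γ := Real.rpow_pos_of_pos hy0 γ
    have hune : u y ≠ 0 := ne_of_gt (hu_pos y hy)
    have h1γ : y ^ (1+γ) = y ^ γ * y := by
      rw [Real.rpow_add hy0, Real.rpow_one]; ring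
    set v : ℝ := (1 + u y) ^ (1/p) - 1 with hv
    have e1 : (1+y) ^ p - 1 = u y * y ^ p := by
      rw [hu]; field_simp
    have hL : y * (1 + u y) ^ (1/p) - y = v * y := by rw [hv]; ring
    have hdiv : v * y ^ p / y = v / y ^ γ := by
      rw [div_eq_div_iff (ne_of_gt hy0) (ne_of_gt hγp), mul_assoc, hypγ y hy0]
    have hR : v / u y * (u y * y ^ p / y) = v * y ^ p / y := by
      field_simp
    rw [hG_eq y hy, h1γ, hL, e1, hR, hdiv, mul_div_mul_right _ _ (ne_of_gt hy0)]
  have L2 : Tendsto (fun w : ℝ => ((1+w) ^ (1/p) - 1) / w) (𝓝[≠] 0) (𝓝 (1/p)) :=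
    slopeLim (1/p)
  have P1 : Tendsto (fun y : ℝ => (G y - y) / y ^ (1 + γ)) (𝓝[>] 0) (𝓝 1) := by
    have h := (L2.comp Lu').mul L1
    rw [show 1/p * p = 1 by field_simp] at h
    exact h.congr' (eventually_nhdsWithin_of_forall (fun y hy => (key y hy).symm))
  -- second limit
  have P2 : Tendsto (fun y : ℝ => G y / y) (𝓝[>] 0) (𝓝 1) := by
    have h := (P1.mul Lγ).add (tendsto_const_nhds (x := (1:ℝ)))
    rw [mul_zero, zero_add] at h
    refine h.congr' (eventually_nhdsWithin_of_forall (fun y hy => ?_))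
    have hy0 : (0:ℝ) < y := hy
    have h1γ : y ^ (1+γ) = y ^ γ * y := by
      rw [Real.rpow_add hy0, Real.rpow_one]; ring
    have hγp : (0:ℝ) < y ^ γ := Real.rpow_pos_of_pos hy0 γ
    rw [h1γ]
    field_simp
    ring
  -- T 0 = 0
  have hG0 : G 0 = 0 := by
    have hzero : (0:ℝ) ^ p + (1+0) ^ p - 1 = 0 := by
      rw [Real.zero_rpow hpne]; norm_num
    rw [hG 0, hzero, Real.zero_rpow (one_div_ne_zero hpne)]
  have hT0 : T 0 = 0 := by rw [hT 0, hG0]; simp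
  refine ⟨P1, P2, hT0, ?_⟩
  -- derivative
  rw [hasDerivWithinAt_iff_tendsto_slope]
  have hset : Set.Ioi (0:ℝ) \ {0} = Set.Ioi 0 := by
    ext x; simp (config := {contextual := true}) [ne_of_gt]
  rw [hset]
  have hGsmall : ∀ᶠ y in 𝓝[>] (0:ℝ), Int.fract (G y) = G y := by
    have hGto0 : Tendsto G (𝓝[>] 0) (𝓝 0) := by
      have h := P2.mul (tendsto_id.mono_left nhdsWithin_le_nhds)
      rw [mul_zero] at h
      refine h.congr' (eventually_nhdsWithin_of_forall (fun y hy => ?_))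
      have hy0 : (0:ℝ) < y := hy
      field_simp
      rfl
    have h1 : ∀ᶠ y in 𝓝[>] (0:ℝ), G y < 1 := hGto0.eventually (eventually_lt_nhds zero_lt_one)
    have h2 : ∀ᶠ y in 𝓝[>] (0:ℝ), 0 < G y / y :=
      P2.eventually ((eventually_gt_nhds (show (0:ℝ) < 1 by norm_num)))
    filter_upwards [h1, h2, self_mem_nhdsWithin] with y hy1 hy2 hy3
    have hy0 : (0:ℝ) < y := hy3
    have hGy : 0 < G y := by
      have hm := mul_pos hy2 hy0
      rwa [div_mul_cancel₀ _ (ne_of_gt hy0)] at hm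
    exact Int.fract_eq_self.mpr ⟨le_of_lt hGy, hy1⟩
  refine P2.congr' ?_
  filter_upwards [hGsmall, self_mem_nhdsWithin] with y hy1 hy2
  simp [slope_def_field, hT y, hT0, hy1, div_eq_inv_mul]
end

section
/- For γ ∈ (0,1), the measure μ with density h with respect to Lebesgue measure on [0,1] is invariant under the Thaler map T: for every Borel set A ⊆ [0,1], μ(T⁻¹(A)) = μ(A). -/
open MeasureTheory

noncomputable def Gm (γ : ℝ) : ℝ → ℝ :=
  fun y => (y ^ (1 - γ) + (1 + y) ^ (1 - γ) - 1) ^ (1 / (1 - γ))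

noncomputable def Gd (γ : ℝ) : ℝ → ℝ :=
  fun y => (y ^ (1 - γ) + (1 + y) ^ (1 - γ) - 1) ^ (1 / (1 - γ) - 1) *
    (y ^ (-γ) + (1 + y) ^ (-γ))

noncomputable def gg (γ : ℝ) : ℝ → ℝ :=
  fun x => ((1 - γ) / 2 ^ (1 - γ)) * x ^ (-γ)

section Aux

variable {γ : ℝ} (hγ0 : 0 < γ) (hγ1 : γ < 1)

lemma u_pos {y : ℝ} (hy : 0 < y) (h1γ : 0 < 1 - γ) :
    0 < y ^ (1 - γ) + (1 + y) ^ (1 - γ) - 1 := by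
  have h1 : 0 < y ^ (1 - γ) := Real.rpow_pos_of_pos hy _
  have h2 : (1 : ℝ) ≤ (1 + y) ^ (1 - γ) := by
    calc (1 : ℝ) = 1 ^ (1 - γ) := (Real.one_rpow _).symm
    _ ≤ (1 + y) ^ (1 - γ) :=
      Real.rpow_le_rpow zero_le_one (by linarith) h1γ.le
  linarith

include hγ0 hγ1 in
lemma Gm_hasDerivAt {y : ℝ} (hy : 0 < y) : HasDerivAt (Gm γ) (Gd γ y) y := by
  have h1γ : 0 < 1 - γ := by linarith
  have h1y : (0:ℝ) < 1 + y := by linarith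
  have hu : 0 < y ^ (1 - γ) + (1 + y) ^ (1 - γ) - 1 := u_pos hy h1γ
  have d1 : HasDerivAt (fun y : ℝ => y ^ (1 - γ)) (1 * (1 - γ) * y ^ (1 - γ - 1)) y :=
    (hasDerivAt_id y).rpow_const (Or.inl hy.ne')
  have d2 : HasDerivAt (fun y : ℝ => (1 + y) ^ (1 - γ)) (1 * (1 - γ) * (1 + y) ^ (1 - γ - 1)) y :=
    ((hasDerivAt_id y).const_add 1).rpow_const (Or.inl h1y.ne')
  have du : HasDerivAt (fun y : ℝ => y ^ (1 - γ) + (1 + y) ^ (1 - γ) - 1)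
      (1 * (1 - γ) * y ^ (1 - γ - 1) + 1 * (1 - γ) * (1 + y) ^ (1 - γ - 1)) y :=
    (d1.add d2).sub_const 1
  have dG := du.rpow_const (p := 1 / (1 - γ)) (Or.inl hu.ne')
  have e1 : (1 : ℝ) - γ - 1 = -γ := by ring
  rw [e1] at dG
  convert dG using 1
  · rfl
  unfold Gd
  field_simp

include hγ0 hγ1 in
lemma Gd_pos {y : ℝ} (hy : 0 < y) : 0 < Gd γ y := by
  have h1γ : 0 < 1 - γ := by linarith
  have h1y : (0:ℝ) < 1 + y := by linarith
  have hu : 0 < y ^ (1 - γ) + (1 + y) ^ (1 - γ) - 1 := u_pos hy h1γ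
  have := Real.rpow_pos_of_pos hu (1 / (1 - γ) - 1)
  have h2 := Real.rpow_pos_of_pos hy (-γ)
  have h3 := Real.rpow_pos_of_pos h1y (-γ)
  unfold Gd
  positivity

include hγ0 hγ1 in
lemma Gm_cont : Continuous (Gm γ) := by
  have h1γ : (0:ℝ) ≤ 1 - γ := by linarith
  have c1 : Continuous fun y : ℝ => y ^ (1 - γ) := Real.continuous_rpow_const h1γ
  have c2 : Continuous fun y : ℝ => (1 + y) ^ (1 - γ) :=
    c1.comp (continuous_const.add continuous_id)
  have hq : (0:ℝ) ≤ 1 / (1 - γ) := by positivity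
  exact (Real.continuous_rpow_const hq).comp ((c1.add c2).sub continuous_const)

include hγ0 hγ1 in
lemma Gm_mono : StrictMonoOn (Gm γ) (Set.Icc 0 1) := by
  apply strictMonoOn_of_hasDerivWithinAt_pos (f' := Gd γ) (convex_Icc 0 1)
    ((Gm_cont hγ0 hγ1).continuousOn)
  · intro x hx
    rw [interior_Icc] at hx
    exact ((Gm_hasDerivAt hγ0 hγ1 hx.1).hasDerivWithinAt)
  · intro x hx
    rw [interior_Icc] at hx
    exact Gd_pos hγ0 hγ1 hx.1

include hγ0 hγ1 in
lemma Gm_zero : Gm γ 0 = 0 := by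
  have h1γ : (1:ℝ) - γ ≠ 0 := by intro h; nlinarith
  have hq : ((1:ℝ) - γ)⁻¹ ≠ 0 := by
    simp only [ne_eq, inv_eq_zero]; exact h1γ
  unfold Gm
  rw [Real.zero_rpow h1γ, add_zero, Real.one_rpow]
  norm_num
  exact Real.zero_rpow hq

include hγ0 hγ1 in
lemma Gm_one : Gm γ 1 = 2 := by
  have h1γ : (0:ℝ) < 1 - γ := by linarith
  unfold Gm
  rw [Real.one_rpow]
  norm_num
  rw [← Real.rpow_mul (by norm_num : (0:ℝ) ≤ 2)]
  rw [mul_inv_cancel₀ h1γ.ne', Real.rpow_one]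

include hγ0 hγ1 in
lemma key_identity {y : ℝ} (hy : 0 < y) :
    Gd γ y * gg γ (Gm γ y) = ((1 - γ) / 2 ^ (1 - γ)) * (y ^ (-γ) + (1 + y) ^ (-γ)) := by
  have h1γ : 0 < 1 - γ := by linarith
  have hu : 0 < y ^ (1 - γ) + (1 + y) ^ (1 - γ) - 1 := u_pos hy h1γ
  set u : ℝ := y ^ (1 - γ) + (1 + y) ^ (1 - γ) - 1 with hud
  unfold Gd gg Gm
  rw [← hud]
  have e2 : (u ^ (1 / (1 - γ))) ^ (-γ) = u ^ (1 / (1 - γ) * (-γ)) :=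
    (Real.rpow_mul hu.le _ _).symm
  have e3 : u ^ (1 / (1 - γ) - 1) * u ^ (1 / (1 - γ) * (-γ)) = 1 := by
    rw [← Real.rpow_add hu]
    have : 1 / (1 - γ) - 1 + 1 / (1 - γ) * (-γ) = 0 := by
      field_simp
      ring
    rw [this, Real.rpow_zero]
  rw [e2]
  linear_combination ((1 - γ) / 2 ^ (1 - γ)) * (y ^ (-γ) + (1 + y) ^ (-γ)) * e3

end Aux

open MeasureTheory in
theorem my_cov {s : Set ℝ} {f f' : ℝ → ℝ} (hs : MeasurableSet s)
    (hf' : ∀ x ∈ s, HasDerivWithinAt f (f' x) s x) (hf : Set.InjOn f s) (g : ℝ → ENNReal) :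
    ∫⁻ x in f '' s, g x = ∫⁻ x in s, ENNReal.ofReal |f' x| * g (f x) := by
  simpa only [ContinuousLinearMap.det_toSpanSingleton] using
    lintegral_image_eq_lintegral_abs_det_fderiv_mul volume hs
      (fun x hx => (hf' x hx).hasFDerivWithinAt) hf g

/-- For `γ ∈ (0,1)`, the measure `μ` with density `h` with respect to Lebesgue measure
on `[0,1]` is invariant under the Thaler map `T`: for every Borel set `A ⊆ [0,1]`,
`μ (T⁻¹ A) = μ A`. -/
theorem stmt_5 (γ : ℝ) (hγ : γ ∈ Set.Ioo (0:ℝ) 1)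
    (G T : ℝ → ℝ)
    (hG : ∀ y : ℝ, G y = (y ^ (1 - γ) + (1 + y) ^ (1 - γ) - 1) ^ (1 / (1 - γ)))
    (hT : ∀ y : ℝ, T y = Int.fract (G y))
    (h : ℝ → ℝ)
    (hh : ∀ y ∈ Set.Ioc (0:ℝ) 1,
      h y = ((1 - γ) / (2:ℝ) ^ (1 - γ)) * (y ^ (-γ) + (1 + y) ^ (-γ)))
    (μ : Measure ℝ)
    (hμ : μ = (volume.restrict (Set.Icc (0:ℝ) 1)).withDensity
      (fun y => ENNReal.ofReal (h y))) :
    ∀ A : Set ℝ, MeasurableSet A → A ⊆ Set.Icc (0:ℝ) 1 → μ (T ⁻¹' A) = μ A := by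
  obtain ⟨hγ0, hγ1⟩ := hγ
  have h1γ : (0:ℝ) < 1 - γ := by linarith
  obtain rfl : G = Gm γ := funext hG
  obtain rfl : T = fun y => Int.fract (Gm γ y) := funext hT
  subst hμ
  intro A hA hAsub
  have hGc : Continuous (Gm γ) := Gm_cont hγ0 hγ1
  have hGmono := Gm_mono hγ0 hγ1
  have hG0 := Gm_zero hγ0 hγ1
  have hG1 := Gm_one hγ0 hγ1
  have hginj : Set.InjOn (Gm γ) (Set.Icc 0 1) := hGmono.injOn
  have hTmeas : Measurable fun y => Int.fract (Gm γ y) := hGc.measurable.fract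
  set A' : Set ℝ := A ∩ Set.Ioo 0 1 with hA'def
  have hA'm : MeasurableSet A' := hA.inter measurableSet_Ioo
  have hA'sub : A' ⊆ Set.Ioo 0 1 := Set.inter_subset_right
  have hA'A : A' ⊆ A := Set.inter_subset_left
  -- null sets
  have hnull : ∀ S : Set ℝ, MeasurableSet S → volume (S ∩ Set.Icc (0:ℝ) 1) = 0 →
      ((volume.restrict (Set.Icc (0:ℝ) 1)).withDensity
        (fun y => ENNReal.ofReal (h y))) S = 0 := by
    intro S hS hSnull
    rw [withDensity_apply _ hS, Measure.restrict_restrict hS,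
      setLIntegral_measure_zero _ _ hSnull]
  -- surjectivity onto [0,2]
  have hsurj : Set.Icc (0:ℝ) 2 ⊆ Gm γ '' Set.Icc 0 1 := by
    have := intermediate_value_Icc (by norm_num : (0:ℝ) ≤ 1) hGc.continuousOn
    rwa [hG0, hG1] at this
  -- A differs from A' by a null set
  have hAdiffsub : A \ A' ⊆ ({0, 1} : Set ℝ) := by
    intro x hx
    have hxI := hAsub hx.1
    have hxn : x ∉ Set.Ioo (0:ℝ) 1 := fun hc => hx.2 ⟨hx.1, hc⟩
    simp only [Set.mem_Ioo, not_and_or, not_lt] at hxn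
    rcases hxn with h0 | h1
    · left; exact le_antisymm h0 hxI.1
    · right; exact le_antisymm hxI.2 h1
  have hAdiffnull : volume (A \ A') = 0 := by
    refine measure_mono_null hAdiffsub ?_
    exact (Set.toFinite _).measure_zero volume
  have hμAdiff : ((volume.restrict (Set.Icc (0:ℝ) 1)).withDensity
      (fun y => ENNReal.ofReal (h y))) (A \ A') = 0 :=
    hnull _ (hA.diff hA'm) (measure_mono_null Set.inter_subset_left hAdiffnull)
  -- preimage of the difference set is null
  have hfract01 : ∀ y : ℝ, y ∈ Set.Icc (0:ℝ) 1 → Int.fract (Gm γ y) ∈ A \ A' →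
      Gm γ y = 0 ∨ Gm γ y = 1 ∨ Gm γ y = 2 := by
    intro y hyI hyf
    have h01 := hAdiffsub hyf
    have hfr0 : Int.fract (Gm γ y) = 0 := by
      rcases h01 with hc | hc
      · exact hc
      · exact absurd (hc ▸ Int.fract_lt_one (Gm γ y)) (lt_irrefl 1)
    have hint : Gm γ y = (⌊Gm γ y⌋ : ℝ) := by
      have hfa := Int.fract_add_floor (Gm γ y)
      rw [hfr0, zero_add] at hfa
      exact hfa.symm
    have hlb : (0:ℝ) ≤ Gm γ y := by
      have := hGmono.monotoneOn (Set.left_mem_Icc.mpr zero_le_one) hyI hyI.1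
      rwa [hG0] at this
    have hub : Gm γ y ≤ 2 := by
      have := hGmono.monotoneOn hyI (Set.right_mem_Icc.mpr zero_le_one) hyI.2
      rwa [hG1] at this
    have h0n : (0:ℤ) ≤ ⌊Gm γ y⌋ := by
      have : (0:ℝ) ≤ (⌊Gm γ y⌋ : ℝ) := hint ▸ hlb
      exact_mod_cast this
    have h2n : ⌊Gm γ y⌋ ≤ 2 := by
      have : ((⌊Gm γ y⌋ : ℝ)) ≤ 2 := hint ▸ hub
      exact_mod_cast this
    interval_cases hn : ⌊Gm γ y⌋ <;> norm_num at hint <;> simp [hint]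
  have hμpreAdiff : ((volume.restrict (Set.Icc (0:ℝ) 1)).withDensity
      (fun y => ENNReal.ofReal (h y)))
      ((fun y => Int.fract (Gm γ y)) ⁻¹' (A \ A')) = 0 := by
    refine hnull _ (hTmeas (hA.diff hA'm)) ?_
    have hsub : ∀ r : ℝ, volume {y ∈ Set.Icc (0:ℝ) 1 | Gm γ y = r} = 0 := by
      intro r
      refine Set.Subsingleton.measure_zero ?_ volume
      intro a ha b hb
      exact hginj ha.1 hb.1 (ha.2.trans hb.2.symm)
    have hNnull : volume ({y ∈ Set.Icc (0:ℝ) 1 | Gm γ y = 0} ∪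
        {y ∈ Set.Icc (0:ℝ) 1 | Gm γ y = 1} ∪ {y ∈ Set.Icc (0:ℝ) 1 | Gm γ y = 2}) = 0 :=
      measure_union_null (measure_union_null (hsub 0) (hsub 1)) (hsub 2)
    refine measure_mono_null ?_ hNnull
    · rintro y ⟨hyf, hyI⟩
      rcases hfract01 y hyI hyf with hc | hc | hc
      · exact Or.inl (Or.inl ⟨hyI, hc⟩)
      · exact Or.inl (Or.inr ⟨hyI, hc⟩)
      · exact Or.inr ⟨hyI, hc⟩
  -- reduce to A'
  have hredA : ((volume.restrict (Set.Icc (0:ℝ) 1)).withDensity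
      (fun y => ENNReal.ofReal (h y))) A = ((volume.restrict (Set.Icc (0:ℝ) 1)).withDensity
      (fun y => ENNReal.ofReal (h y))) A' := by
    refine le_antisymm ?_ (measure_mono hA'A)
    have hcup : A ⊆ A' ∪ (A \ A') := by rw [Set.union_diff_cancel hA'A]
    refine le_trans (measure_mono hcup) (le_trans (measure_union_le _ _) ?_)
    rw [hμAdiff, add_zero]
  have hredT : ((volume.restrict (Set.Icc (0:ℝ) 1)).withDensity
      (fun y => ENNReal.ofReal (h y))) ((fun y => Int.fract (Gm γ y)) ⁻¹' A) =
      ((volume.restrict (Set.Icc (0:ℝ) 1)).withDensity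
      (fun y => ENNReal.ofReal (h y))) ((fun y => Int.fract (Gm γ y)) ⁻¹' A') := by
    refine le_antisymm ?_ (measure_mono (Set.preimage_mono hA'A))
    have hcup : (fun y => Int.fract (Gm γ y)) ⁻¹' A ⊆
        (fun y => Int.fract (Gm γ y)) ⁻¹' A' ∪ (fun y => Int.fract (Gm γ y)) ⁻¹' (A \ A') := by
      rw [← Set.preimage_union, Set.union_diff_cancel hA'A]
    refine le_trans (measure_mono hcup) (le_trans (measure_union_le _ _) ?_)
    rw [hμpreAdiff, add_zero]
  rw [hredA, hredT]
  -- the two branch sets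
  set B2 : Set ℝ := (fun x => x - 1) ⁻¹' A' with hB2def
  have hB2m : MeasurableSet B2 := hA'm.preimage (measurable_id.sub measurable_const)
  have hB2eq : B2 = (fun x => 1 + x) '' A' := by
    ext x
    simp only [hB2def, Set.mem_preimage, Set.mem_image]
    constructor
    · intro hx; exact ⟨x - 1, hx, by ring⟩
    · rintro ⟨a, ha, rfl⟩; simpa using ha
  have hB2sub : B2 ⊆ Set.Ioo 1 2 := by
    intro x hx
    have hxm : x - 1 ∈ Set.Ioo (0:ℝ) 1 := hA'sub hx
    simp only [Set.mem_Ioo] at hxm ⊢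
    exact ⟨by linarith [hxm.1], by linarith [hxm.2]⟩
  set s1 : Set ℝ := Set.Ioo 0 1 ∩ Gm γ ⁻¹' A' with hs1def
  set s2 : Set ℝ := Set.Ioo 0 1 ∩ Gm γ ⁻¹' B2 with hs2def
  have hs1m : MeasurableSet s1 := measurableSet_Ioo.inter (hGc.measurable hA'm)
  have hs2m : MeasurableSet s2 := measurableSet_Ioo.inter (hGc.measurable hB2m)
  have hs1sub : s1 ⊆ Set.Icc (0:ℝ) 1 := fun y hy => ⟨hy.1.1.le, hy.1.2.le⟩
  have hs2sub : s2 ⊆ Set.Icc (0:ℝ) 1 := fun y hy => ⟨hy.1.1.le, hy.1.2.le⟩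
  have hGlt : ∀ y ∈ Set.Ioo (0:ℝ) 1, Gm γ y ∈ Set.Ioo (0:ℝ) 2 := by
    intro y hy
    constructor
    · have := hGmono (Set.left_mem_Icc.mpr zero_le_one) ⟨hy.1.le, hy.2.le⟩ hy.1
      rwa [hG0] at this
    · have := hGmono ⟨hy.1.le, hy.2.le⟩ (Set.right_mem_Icc.mpr zero_le_one) hy.2
      rwa [hG1] at this
  -- the preimage of A' in [0,1] is s1 ∪ s2
  have hpre : (fun y => Int.fract (Gm γ y)) ⁻¹' A' ∩ Set.Icc 0 1 = s1 ∪ s2 := by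
    ext y
    simp only [Set.mem_inter_iff, Set.mem_preimage, Set.mem_union, hs1def, hs2def]
    constructor
    · rintro ⟨hfr, hyI⟩
      have hfr' := hA'sub hfr
      have hy0 : y ≠ 0 := by
        rintro rfl
        rw [hG0, Int.fract_zero] at hfr'
        exact lt_irrefl 0 hfr'.1
      have hy1 : y ≠ 1 := by
        rintro rfl
        rw [hG1] at hfr'
        norm_num [Int.fract] at hfr'
      have hyO : y ∈ Set.Ioo (0:ℝ) 1 :=
        ⟨lt_of_le_of_ne hyI.1 (Ne.symm hy0), lt_of_le_of_ne hyI.2 hy1⟩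
      have hGO := hGlt y hyO
      rcases lt_trichotomy (Gm γ y) 1 with hlt | heq | hgt
      · left
        refine ⟨hyO, ?_⟩
        rwa [Int.fract_eq_self.mpr ⟨hGO.1.le, hlt⟩] at hfr
      · exfalso
        rw [heq] at hfr'
        norm_num [Int.fract] at hfr'
      · right
        refine ⟨hyO, ?_⟩
        have hfl : ⌊Gm γ y⌋ = 1 := by
          rw [Int.floor_eq_iff]
          constructor
          · push_cast; linarith
          · push_cast; linarith [hGO.2]
        have hfe : Int.fract (Gm γ y) = Gm γ y - 1 := by
          rw [Int.fract, hfl]; norm_num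
        rw [hfe] at hfr
        exact hfr
    · rintro (⟨hyO, hGA⟩ | ⟨hyO, hGB⟩)
      · have hfr' := hA'sub hGA
        refine ⟨?_, ⟨hyO.1.le, hyO.2.le⟩⟩
        rwa [Int.fract_eq_self.mpr ⟨hfr'.1.le, hfr'.2⟩]
      · have hB := hB2sub hGB
        refine ⟨?_, ⟨hyO.1.le, hyO.2.le⟩⟩
        have hfl : ⌊Gm γ y⌋ = 1 := by
          rw [Int.floor_eq_iff]
          constructor
          · push_cast; linarith [hB.1]
          · push_cast; linarith [hB.2]
        have hfe : Int.fract (Gm γ y) = Gm γ y - 1 := by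
          rw [Int.fract, hfl]; norm_num
        rw [hfe]
        exact hGB
  -- images of the branch sets
  have himg1 : Gm γ '' s1 = A' := by
    apply Set.Subset.antisymm
    · rintro _ ⟨y, hy, rfl⟩; exact hy.2
    · intro a ha
      have haO := hA'sub ha
      obtain ⟨y, hyI, rfl⟩ := hsurj ⟨haO.1.le, by linarith [haO.2]⟩
      have hy0 : y ≠ 0 := by
        rintro rfl; rw [hG0] at ha
        exact lt_irrefl 0 (hA'sub ha).1
      have hy1 : y ≠ 1 := by
        rintro rfl; rw [hG1] at ha
        have := (hA'sub ha).2; linarith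
      exact ⟨y, ⟨⟨lt_of_le_of_ne hyI.1 (Ne.symm hy0), lt_of_le_of_ne hyI.2 hy1⟩, ha⟩, rfl⟩
  have himg2 : Gm γ '' s2 = B2 := by
    apply Set.Subset.antisymm
    · rintro _ ⟨y, hy, rfl⟩; exact hy.2
    · intro a ha
      have haO := hB2sub ha
      obtain ⟨y, hyI, rfl⟩ := hsurj ⟨by linarith [haO.1], haO.2.le⟩
      have hy0 : y ≠ 0 := by
        rintro rfl; rw [hG0] at ha
        have := (hB2sub ha).1; linarith
      have hy1 : y ≠ 1 := by
        rintro rfl; rw [hG1] at ha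
        exact lt_irrefl 2 (hB2sub ha).2
      exact ⟨y, ⟨⟨lt_of_le_of_ne hyI.1 (Ne.symm hy0), lt_of_le_of_ne hyI.2 hy1⟩, ha⟩, rfl⟩
  have hdisj : Disjoint s1 s2 := by
    rw [Set.disjoint_left]
    rintro y ⟨_, hy1⟩ ⟨_, hy2⟩
    have hd1 := (hA'sub hy1).2
    have hd2 := (hB2sub hy2).1
    linarith
  -- change of variables on each branch
  have hderiv1 : ∀ x ∈ s1, HasDerivWithinAt (Gm γ) (Gd γ x) s1 x :=
    fun x hx => (Gm_hasDerivAt hγ0 hγ1 hx.1.1).hasDerivWithinAt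
  have hderiv2 : ∀ x ∈ s2, HasDerivWithinAt (Gm γ) (Gd γ x) s2 x :=
    fun x hx => (Gm_hasDerivAt hγ0 hγ1 hx.1.1).hasDerivWithinAt
  have hcov1 := my_cov hs1m hderiv1 (hginj.mono hs1sub)
    (fun x => ENNReal.ofReal (gg γ x))
  have hcov2 := my_cov hs2m hderiv2 (hginj.mono hs2sub)
    (fun x => ENNReal.ofReal (gg γ x))
  rw [himg1] at hcov1
  rw [himg2] at hcov2
  -- translation change of variables
  have hcov3 := my_cov (f := fun x => 1 + x) (f' := fun _ => 1) hA'm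
    (fun x _ => ((hasDerivAt_id x).const_add 1).hasDerivWithinAt)
    (fun a _ b _ hab => by dsimp at hab; linarith) (fun x => ENNReal.ofReal (gg γ x))
  rw [← hB2eq] at hcov3
  simp only [abs_one, ENNReal.ofReal_one, one_mul] at hcov3
  -- pointwise identity on branch sets
  have hcong : ∀ S : Set ℝ, S ⊆ Set.Ioo (0:ℝ) 1 → MeasurableSet S →
      ∫⁻ y in S, ENNReal.ofReal (h y) =
        ∫⁻ y in S, ENNReal.ofReal |Gd γ y| * ENNReal.ofReal (gg γ (Gm γ y)) := by
    intro S hSsub hSm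
    refine setLIntegral_congr_fun hSm (fun y hy => ?_)
    have hy0 : 0 < y := (hSsub hy).1
    have hdp := Gd_pos hγ0 hγ1 hy0
    rw [hh y ⟨hy0, (hSsub hy).2.le⟩, ← key_identity hγ0 hγ1 hy0,
      ENNReal.ofReal_mul hdp.le, abs_of_pos hdp]
  -- compute μ (T⁻¹ A')
  have hTm' : MeasurableSet ((fun y => Int.fract (Gm γ y)) ⁻¹' A') := hTmeas hA'm
  rw [withDensity_apply _ hTm', Measure.restrict_restrict hTm', hpre,
    lintegral_union hs2m hdisj, hcong s1 (fun y hy => hy.1) hs1m,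
    hcong s2 (fun y hy => hy.1) hs2m, ← hcov1, ← hcov2, hcov3]
  -- compute μ A'
  have hA'Icc : A' ∩ Set.Icc (0:ℝ) 1 = A' :=
    Set.inter_eq_left.mpr (fun x hx => ⟨(hA'sub hx).1.le, (hA'sub hx).2.le⟩)
  rw [withDensity_apply _ hA'm, Measure.restrict_restrict hA'm, hA'Icc]
  have hsplit : ∫⁻ y in A', ENNReal.ofReal (h y) =
      ∫⁻ y in A', (ENNReal.ofReal (gg γ y) + ENNReal.ofReal (gg γ (1 + y))) := by
    refine setLIntegral_congr_fun hA'm (fun y hy => ?_)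
    have hyO := hA'sub hy
    have hg1 : 0 ≤ gg γ y := by
      unfold gg
      have := Real.rpow_nonneg hyO.1.le (-γ)
      positivity
    have hg2 : 0 ≤ gg γ (1 + y) := by
      unfold gg
      have h1y : (0:ℝ) ≤ 1 + y := by linarith [hyO.1]
      have := Real.rpow_nonneg h1y (-γ)
      positivity
    rw [hh y ⟨hyO.1, hyO.2.le⟩, ← ENNReal.ofReal_add hg1 hg2]
    congr 1
    unfold gg
    ring
  rw [hsplit, lintegral_add_left (by unfold gg; fun_prop) _]
end

section
/- Second-order pathwise expansion of MPGD iterates: under the stated smoothness, for every fixed k ∈ ℕ, |x_k^ε − (x̄_k + ε φ_k + ε² ψ_k)| = O(ε³) as ε → 0⁺. -/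
section StmtAux
open InnerProductSpace ContinuousLinearMap
variable {E : Type*} [NormedAddCommGroup E] [InnerProductSpace ℝ E] [CompleteSpace E]

noncomputable def iotaCLM (E : Type*) [NormedAddCommGroup E] [InnerProductSpace ℝ E] [CompleteSpace E] :
    (E →L[ℝ] ℝ) →L[ℝ] E := (toDual ℝ E).symm.toContinuousLinearEquiv.toContinuousLinearMap

lemma grad_eq (R : E → ℝ) (x : E) : gradient R x = iotaCLM E (fderiv ℝ R x) := rfl

lemma fderiv_grad {R : E → ℝ} (hR : ContDiff ℝ 4 R) (x : E) :
    fderiv ℝ (gradient R) x = (iotaCLM E).comp (fderiv ℝ (fderiv ℝ R) x) := by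
  have h1 : HasFDerivAt (fderiv ℝ R) (fderiv ℝ (fderiv ℝ R) x) x :=
    (((hR.fderiv_right (m := 3) (by norm_num)).differentiable (by norm_num)) x).hasFDerivAt
  have h2 : HasFDerivAt (gradient R) ((iotaCLM E).comp (fderiv ℝ (fderiv ℝ R) x)) x :=
    ((iotaCLM E).hasFDerivAt.comp x h1 : _)
  exact h2.fderiv

lemma fderiv_fderiv_grad {R : E → ℝ} (hR : ContDiff ℝ 4 R) (x : E) (v w : E) :
    fderiv ℝ (fderiv ℝ (gradient R)) x v w
      = iotaCLM E (fderiv ℝ (fderiv ℝ (fderiv ℝ R)) x v w) := by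
  have hdiff : Differentiable ℝ (fderiv ℝ (fderiv ℝ R)) := by
    have : ContDiff ℝ 2 (fderiv ℝ (fderiv ℝ R)) :=
      (hR.fderiv_right (m := 3) (by norm_num)).fderiv_right (m := 2) (by norm_num)
    exact this.differentiable (by norm_num)
  have h1 : HasFDerivAt (fderiv ℝ (fderiv ℝ R)) (fderiv ℝ (fderiv ℝ (fderiv ℝ R)) x) x :=
    (hdiff x).hasFDerivAt
  have key : HasFDerivAt (fderiv ℝ (gradient R))
      ((compL ℝ E (E →L[ℝ] ℝ) E (iotaCLM E)).comp (fderiv ℝ (fderiv ℝ (fderiv ℝ R)) x)) x := by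
    have h2 : HasFDerivAt (fun y => (compL ℝ E (E →L[ℝ] ℝ) E (iotaCLM E)) (fderiv ℝ (fderiv ℝ R) y))
        ((compL ℝ E (E →L[ℝ] ℝ) E (iotaCLM E)).comp (fderiv ℝ (fderiv ℝ (fderiv ℝ R)) x)) x :=
      ((compL ℝ E (E →L[ℝ] ℝ) E (iotaCLM E)).hasFDerivAt.comp x h1 :
        HasFDerivAt (⇑(compL ℝ E (E →L[ℝ] ℝ) E (iotaCLM E)) ∘ (fderiv ℝ (fderiv ℝ R))) _ x)
    apply h2.congr_of_eventuallyEq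
    filter_upwards with y
    rw [fderiv_grad hR y]; rfl
  rw [key.fderiv]; rfl

lemma three_apply {R : E → ℝ} (x v w u : E) :
    fderiv ℝ (fderiv ℝ (fderiv ℝ R)) x v w u = iteratedFDeriv ℝ 3 R x ![v, w, u] := by
  have h := iteratedFDeriv_succ_apply_right (𝕜 := ℝ) (f := R) (x := x) (n := 2) ![v, w, u]
  have hinit : Fin.init ![v, w, u] = ![v, w] := by
    funext i; fin_cases i <;> simp [Fin.init]
  rw [hinit] at h
  rw [h, iteratedFDeriv_two_apply]
  rfl

lemma grad_contDiff {R : E → ℝ} (hR : ContDiff ℝ 4 R) : ContDiff ℝ 3 (gradient R) := by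
  have h : gradient R = fun x => (toDual ℝ E).symm (fderiv ℝ R x) := rfl
  rw [h]
  exact (toDual ℝ E).symm.contDiff.comp (hR.fderiv_right (by norm_num))

lemma lip_D2g {R : E → ℝ} (hR : ContDiff ℝ 4 R) {L : NNReal}
    (hLip : LipschitzWith L (iteratedFDeriv ℝ 3 R)) (x y : E) :
    ‖fderiv ℝ (fderiv ℝ (gradient R)) x - fderiv ℝ (fderiv ℝ (gradient R)) y‖
      ≤ L * ‖x - y‖ := by
  apply opNorm_le_bound _ (by positivity)
  intro v
  apply opNorm_le_bound _ (by positivity)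
  intro w
  simp only [sub_apply]
  rw [fderiv_fderiv_grad hR x, fderiv_fderiv_grad hR y, ← map_sub]
  have hiso : ∀ z : E →L[ℝ] ℝ, ‖iotaCLM E z‖ = ‖z‖ := fun z =>
    (toDual ℝ E).symm.norm_map z
  rw [hiso]
  apply opNorm_le_bound _ (by positivity)
  intro u
  simp only [sub_apply]
  have h3 : ∀ p : E, fderiv ℝ (fderiv ℝ (fderiv ℝ R)) p v w u = iteratedFDeriv ℝ 3 R p ![v,w,u] :=
    fun p => three_apply p v w u
  rw [h3, h3]
  have := (iteratedFDeriv ℝ 3 R x - iteratedFDeriv ℝ 3 R y).le_opNorm ![v, w, u]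
  simp only [ContinuousMultilinearMap.sub_apply] at this
  have hprod : ∏ i, ‖![v, w, u] i‖ = ‖v‖ * ‖w‖ * ‖u‖ := by
    rw [Fin.prod_univ_three]; rfl
  rw [hprod] at this
  have hL : ‖iteratedFDeriv ℝ 3 R x - iteratedFDeriv ℝ 3 R y‖ ≤ L * ‖x - y‖ := by
    have := hLip.dist_le_mul x y
    rwa [dist_eq_norm, dist_eq_norm] at this
  nlinarith [this, mul_le_mul_of_nonneg_right hL
    (by positivity : (0:ℝ) ≤ ‖v‖ * ‖w‖ * ‖u‖)]

lemma taylor2 {R : E → ℝ} (hR : ContDiff ℝ 4 R) {L : ℝ} (hL : 0 ≤ L)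
    (hLip : ∀ p q : E, ‖fderiv ℝ (fderiv ℝ (gradient R)) p - fderiv ℝ (fderiv ℝ (gradient R)) q‖
      ≤ L * ‖p - q‖) (x y : E) :
    ‖gradient R y - gradient R x - fderiv ℝ (gradient R) x (y - x)
      - (1/2 : ℝ) • (fderiv ℝ (fderiv ℝ (gradient R)) x (y - x)) (y - x)‖
      ≤ L * ‖y - x‖ ^ 3 := by
  set g := gradient R with hg_def
  have hg : ContDiff ℝ 3 g := grad_contDiff hR
  have hgd : Differentiable ℝ g := hg.differentiable (by norm_num)
  have hgd1 : Differentiable ℝ (fderiv ℝ g) :=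
    (hg.fderiv_right (m := 2) (by norm_num)).differentiable (by norm_num)
  set B := fderiv ℝ (fderiv ℝ g) x with hB_def
  have hsymm : ∀ v w : E, B v w = B w v := fun v w =>
    (hg.contDiffAt.isSymmSndFDerivAt (by norm_num)).eq v w
  set s : Set E := Metric.closedBall x ‖y - x‖ with hs_def
  -- step 1 : first-order Taylor bound for fderiv g on s
  have step1 : ∀ z ∈ s, ‖fderiv ℝ g z - fderiv ℝ g x - B (z - x)‖ ≤ L * ‖y - x‖ ^ 2 := by
    intro z hz
    have hzx : ‖z - x‖ ≤ ‖y - x‖ := by rwa [← dist_eq_norm, ← Metric.mem_closedBall]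
    have := Convex.norm_image_sub_le_of_norm_hasFDerivWithin_le'
      (f := fderiv ℝ g) (f' := fun p => fderiv ℝ (fderiv ℝ g) p) (φ := B)
      (s := s) (x := x) (y := z) (C := L * ‖y - x‖)
      (fun p _ => ((hgd1 p).hasFDerivAt).hasFDerivWithinAt)
      (fun p hp => by
        have hpx : ‖p - x‖ ≤ ‖y - x‖ := by rwa [← dist_eq_norm, ← Metric.mem_closedBall]
        calc ‖fderiv ℝ (fderiv ℝ g) p - B‖ ≤ L * ‖p - x‖ := hLip p x
          _ ≤ L * ‖y - x‖ := by apply mul_le_mul_of_nonneg_left hpx hL)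
      (convex_closedBall x _) (Metric.mem_closedBall_self (norm_nonneg _)) hz
    calc ‖fderiv ℝ g z - fderiv ℝ g x - B (z - x)‖ ≤ L * ‖y - x‖ * ‖z - x‖ := this
      _ ≤ L * ‖y - x‖ * ‖y - x‖ := by
          apply mul_le_mul_of_nonneg_left hzx (by positivity)
      _ = L * ‖y - x‖ ^ 2 := by ring
  -- step 2 : derivative of the Taylor remainder
  set F : E → E := fun z => g z - (fderiv ℝ g x) (z - x) - (1/2 : ℝ) • (B (z - x)) (z - x)
    with hF_def
  have hF : ∀ z : E, HasFDerivAt F (fderiv ℝ g z - fderiv ℝ g x - B (z - x)) z := by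
    intro z
    have h1 : HasFDerivAt (fun p : E => p - x) (ContinuousLinearMap.id ℝ E) z :=
      (hasFDerivAt_id z).sub_const x
    have hA : HasFDerivAt (fun p : E => (fderiv ℝ g x) (p - x)) (fderiv ℝ g x) z := by
      have := ((fderiv ℝ g x).hasFDerivAt.comp z h1 :
        HasFDerivAt (⇑(fderiv ℝ g x) ∘ fun p : E => p - x) _ z)
      rwa [comp_id] at this
    have hc : HasFDerivAt (fun p : E => B (p - x)) (B.comp (ContinuousLinearMap.id ℝ E)) z :=
      (B.hasFDerivAt.comp z h1 : HasFDerivAt (⇑B ∘ fun p : E => p - x) _ z)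
    have hq := hc.clm_apply h1
    have hFd := ((hgd z).hasFDerivAt.sub hA).sub (hq.const_smul (1/2 : ℝ))
    have heq : (fderiv ℝ g z - fderiv ℝ g x -
        (1/2 : ℝ) • ((B (z - x)).comp (ContinuousLinearMap.id ℝ E)
          + (B.comp (ContinuousLinearMap.id ℝ E)).flip (z - x)))
        = fderiv ℝ g z - fderiv ℝ g x - B (z - x) := by
      ext v
      simp only [sub_apply, smul_apply, add_apply, coe_comp', Function.comp_apply,
        coe_id', id_eq, flip_apply, smul_eq_mul]
      rw [hsymm v (z - x)]
      module
    rw [heq] at hFd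
    exact hFd
  -- step 3 : mean value inequality for F
  have step3 := Convex.norm_image_sub_le_of_norm_hasFDerivWithin_le'
    (f := F) (f' := fun z => fderiv ℝ g z - fderiv ℝ g x - B (z - x)) (φ := 0)
    (s := s) (x := x) (y := y) (C := L * ‖y - x‖ ^ 2)
    (fun p _ => (hF p).hasFDerivWithinAt)
    (fun p hp => by rw [sub_zero]; exact step1 p hp)
    (convex_closedBall x _) (Metric.mem_closedBall_self (norm_nonneg _))
    (by simp [hs_def, Metric.mem_closedBall, dist_eq_norm])
  have hFx : F x = g x := by simp [hF_def]
  have hFy : F y - F x - (0 : E →L[ℝ] E) (y - x)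
      = g y - g x - fderiv ℝ g x (y - x)
        - (1/2 : ℝ) • (fderiv ℝ (fderiv ℝ g) x (y - x)) (y - x) := by
    rw [hFx]; simp only [hF_def, zero_apply, sub_zero, ← hB_def]; abel
  rw [hFy] at step3
  calc ‖g y - g x - fderiv ℝ g x (y - x)
      - (1/2 : ℝ) • (fderiv ℝ (fderiv ℝ g) x (y - x)) (y - x)‖
      ≤ L * ‖y - x‖ ^ 2 * ‖y - x‖ := step3
    _ = L * ‖y - x‖ ^ 3 := by ring

lemma stmt10_sum_bilin {d : ℕ}
    (B : EuclideanSpace ℝ (Fin d) →L[ℝ] EuclideanSpace ℝ (Fin d) →L[ℝ] EuclideanSpace ℝ (Fin d))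
    (v : EuclideanSpace ℝ (Fin d)) :
    ∑ i : Fin d, ∑ j : Fin d, (v i * v j) •
      B (EuclideanSpace.single i 1) (EuclideanSpace.single j 1) = B v v := by
  have hv : v = ∑ i : Fin d, v i • EuclideanSpace.single i (1:ℝ) := by
    have := (EuclideanSpace.basisFun (Fin d) ℝ).sum_repr v
    simp only [EuclideanSpace.basisFun_repr, EuclideanSpace.basisFun_apply] at this
    exact this.symm
  conv_rhs => rw [hv]
  simp only [map_sum, map_smul, ContinuousLinearMap.sum_apply, ContinuousLinearMap.smul_apply,
    Finset.smul_sum, smul_smul]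
  rw [Finset.sum_comm]
  apply Finset.sum_congr rfl; intro i _
  apply Finset.sum_congr rfl; intro j _
  ring_nf

lemma stmt10_key_id {E : Type*} [AddCommGroup E] [Module ℝ E]
    (m ε a c : ℝ)
    (xb xb' p p' s s' xe xe' w e gxe gxb He Hp Hs Bpp BΔΔ r q : E)
    (h1 : xe' = xe - (1/m) • gxe - (ε*a) • xe + (ε*c) • w)
    (h2 : xb' = xb - (1/m) • gxb)
    (h3 : p' = (p - (1/m) • Hp) - a • xb + c • w)
    (h4 : s' = (s - (1/m) • Hs) - (1/(2*m)) • Bpp - a • p)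
    (h5 : xe = xb + e + ε • p + ε^2 • s)
    (h6 : gxe = gxb + (He + ε • Hp + ε^2 • Hs) + (1/2 : ℝ) • BΔΔ + r)
    (h7 : BΔΔ = ε^2 • Bpp + q) :
    xe' - (xb' + ε • p' + ε^2 • s')
      = (e - (1/m) • He) - (1/m) • r - (1/(2*m)) • q - (ε^3*a) • s - (ε*a) • e := by
  subst h1 h2 h3 h4 h6 h7 h5
  match_scalars <;> field_simp <;> ring
set_option maxHeartbeats 1600000 in
lemma stmt10_step {E : Type*} [NormedAddCommGroup E] [NormedSpace ℝ E]
    (m : ℝ) (hm : 0 < m) (L C a c ε : ℝ) (hL : 0 ≤ L) (hC : 0 ≤ C)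
    (hε : 0 < ε) (hε1 : ε ≤ 1)
    (J' H : E →L[ℝ] E) (B : E →L[ℝ] E →L[ℝ] E)
    (xb xb' p p' s s' xe xe' w gxe gxb : E)
    (hJ' : J' = ContinuousLinearMap.id ℝ E - (1/m) • H)
    (h1 : xe' = xe - (1/m) • gxe - (ε*a) • xe + (ε*c) • w)
    (h2 : xb' = xb - (1/m) • gxb)
    (h3 : p' = J' p - a • xb + c • w)
    (h4 : s' = J' s - (1/(2*m)) • (B p p) - a • p)
    (htay : ‖gxe - gxb - H (xe - xb) - (1/2 : ℝ) • (B (xe - xb)) (xe - xb)‖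
      ≤ L * ‖xe - xb‖ ^ 3)
    (he : ‖xe - (xb + ε • p + ε ^ 2 • s)‖ ≤ C * ε ^ 3) :
    ‖xe' - (xb' + ε • p' + ε ^ 2 • s')‖
      ≤ (‖J'‖ * C + (1/m) * (L * (C + ‖p‖ + ‖s‖) ^ 3)
        + (1/(2*m)) * (‖B‖ * ((C + ‖s‖) * ((C + ‖p‖ + ‖s‖) + ‖p‖)))
        + |a| * ‖s‖ + |a| * C) * ε ^ 3 := by
  have hJapp : ∀ v : E, J' v = v - (1/m) • H v := by
    intro v
    rw [hJ']
    simp [ContinuousLinearMap.sub_apply, ContinuousLinearMap.smul_apply]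
  rw [hJapp p] at h3
  rw [hJapp s] at h4
  set D := C + ‖p‖ + ‖s‖ with hD_def
  clear_value D
  have hD0 : 0 ≤ D := by
    have := norm_nonneg p; have := norm_nonneg s; rw [hD_def]; linarith
  have h1m : (0:ℝ) ≤ 1 / m := by positivity
  have h2m : (0:ℝ) ≤ 1 / (2 * m) := by positivity
  set e := xe - (xb + ε • p + ε ^ 2 • s) with he_def
  set Δ := xe - xb with hΔ_def
  clear_value e Δ
  have h5 : xe = xb + e + ε • p + ε ^ 2 • s := by rw [he_def]; abel
  have hΔ5 : Δ = e + ε • p + ε ^ 2 • s := by rw [hΔ_def, he_def]; abel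
  set r := gxe - gxb - H Δ - (1/2 : ℝ) • (B Δ) Δ with hr_def
  set q := (B Δ) Δ - ε ^ 2 • (B p) p with hq_def
  clear_value r q
  have hε2 : ε ^ 2 ≤ ε := by nlinarith [mul_nonneg hε.le (sub_nonneg.mpr hε1)]
  have hε32 : ε ^ 3 ≤ ε ^ 2 := by
    nlinarith [mul_nonneg (mul_nonneg hε.le hε.le) (sub_nonneg.mpr hε1)]
  have hε3 : ε ^ 3 ≤ ε := le_trans hε32 hε2
  have htay' : ‖r‖ ≤ L * ‖Δ‖ ^ 3 := htay
  have hΔnorm : ‖Δ‖ ≤ D * ε := by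
    rw [hΔ5]
    calc ‖e + ε • p + ε ^ 2 • s‖
        ≤ ‖e‖ + ‖ε • p‖ + ‖ε ^ 2 • s‖ := norm_add₃_le
      _ = ‖e‖ + ε * ‖p‖ + ε ^ 2 * ‖s‖ := by
          rw [norm_smul, norm_smul, Real.norm_eq_abs, Real.norm_eq_abs,
            abs_of_pos hε, abs_of_pos (pow_pos hε 2)]
      _ ≤ D * ε := by
          have h1 : ‖e‖ ≤ C * ε := le_trans he (mul_le_mul_of_nonneg_left hε3 hC)
          have h3 : ε ^ 2 * ‖s‖ ≤ ‖s‖ * ε := by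
            nlinarith [mul_le_mul_of_nonneg_right hε2 (norm_nonneg s)]
          rw [hD_def]; nlinarith [norm_nonneg p]
  have hΔφ : ‖Δ - ε • p‖ ≤ (C + ‖s‖) * ε ^ 2 := by
    have hh : Δ - ε • p = e + ε ^ 2 • s := by rw [hΔ5]; abel
    rw [hh]
    calc ‖e + ε ^ 2 • s‖ ≤ ‖e‖ + ‖ε ^ 2 • s‖ := norm_add_le _ _
      _ = ‖e‖ + ε ^ 2 * ‖s‖ := by
          rw [norm_smul, Real.norm_eq_abs, abs_of_pos (pow_pos hε 2)]
      _ ≤ (C + ‖s‖) * ε ^ 2 := by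
          linarith [he, mul_le_mul_of_nonneg_left hε32 hC]
  have hq2 : q = (B Δ) (Δ - ε • p) + (B (Δ - ε • p)) (ε • p) := by
    rw [hq_def]
    simp only [map_sub, map_smul, ContinuousLinearMap.sub_apply,
      ContinuousLinearMap.smul_apply]
    module
  have hqnorm : ‖q‖ ≤ ‖B‖ * ((C + ‖s‖) * (D + ‖p‖)) * ε ^ 3 := by
    rw [hq2]
    have b1 : ‖(B Δ) (Δ - ε • p)‖ ≤ ‖B‖ * ‖Δ‖ * ‖Δ - ε • p‖ :=
      B.le_opNorm₂ Δ (Δ - ε • p)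
    have b2 : ‖(B (Δ - ε • p)) (ε • p)‖ ≤ ‖B‖ * ‖Δ - ε • p‖ * (ε * ‖p‖) := by
      have := B.le_opNorm₂ (Δ - ε • p) (ε • p)
      rwa [norm_smul, Real.norm_eq_abs, abs_of_pos hε] at this
    have m1 : ‖Δ‖ * ‖Δ - ε • p‖ ≤ (D * ε) * ((C + ‖s‖) * ε ^ 2) :=
      mul_le_mul hΔnorm hΔφ (norm_nonneg _) (mul_nonneg hD0 hε.le)
    have m2 : ‖Δ - ε • p‖ * (ε * ‖p‖) ≤ ((C + ‖s‖) * ε ^ 2) * (ε * ‖p‖) :=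
      mul_le_mul_of_nonneg_right hΔφ (mul_nonneg hε.le (norm_nonneg _))
    calc ‖(B Δ) (Δ - ε • p) + (B (Δ - ε • p)) (ε • p)‖
        ≤ ‖(B Δ) (Δ - ε • p)‖ + ‖(B (Δ - ε • p)) (ε • p)‖ := norm_add_le _ _
      _ ≤ ‖B‖ * ((D * ε) * ((C + ‖s‖) * ε ^ 2))
          + ‖B‖ * (((C + ‖s‖) * ε ^ 2) * (ε * ‖p‖)) := by
          have u1 := mul_le_mul_of_nonneg_left m1 (norm_nonneg B)
          have u2 := mul_le_mul_of_nonneg_left m2 (norm_nonneg B)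
          linarith [b1, b2, u1, u2]
      _ = ‖B‖ * ((C + ‖s‖) * (D + ‖p‖)) * ε ^ 3 := by ring
  have h6' : gxe = gxb + (H e + ε • H p + ε ^ 2 • H s) + (1/2 : ℝ) • ((B Δ) Δ) + r := by
    have hHΔ : H Δ = H e + ε • H p + ε ^ 2 • H s := by
      rw [hΔ5]; simp [map_add, map_smul]
    rw [hr_def, ← hHΔ]; abel
  have h7' : (B Δ) Δ = ε ^ 2 • (B p) p + q := by rw [hq_def]; abel
  have keyid := stmt10_key_id m ε a c xb xb' p p' s s' xe xe' w e gxe gxb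
    (H e) (H p) (H s) ((B p) p) ((B Δ) Δ) r q h1 h2 h3 h4 h5 h6' h7'
  have hJe : J' e = e - (1/m) • H e := hJapp e
  rw [← hJe] at keyid
  rw [keyid]
  have t1 : ‖J' e‖ ≤ ‖J'‖ * (C * ε ^ 3) :=
    le_trans (J'.le_opNorm e) (mul_le_mul_of_nonneg_left he (norm_nonneg _))
  have t2 : ‖(1/m) • r‖ ≤ (1/m) * (L * (D * ε) ^ 3) := by
    rw [norm_smul, Real.norm_eq_abs, abs_of_nonneg h1m]
    apply mul_le_mul_of_nonneg_left _ h1m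
    calc ‖r‖ ≤ L * ‖Δ‖ ^ 3 := htay'
      _ ≤ L * (D * ε) ^ 3 := by
          apply mul_le_mul_of_nonneg_left _ hL
          exact pow_le_pow_left₀ (norm_nonneg _) hΔnorm 3
  have t3 : ‖(1/(2*m)) • q‖ ≤ (1/(2*m)) * (‖B‖ * ((C + ‖s‖) * (D + ‖p‖)) * ε ^ 3) := by
    rw [norm_smul, Real.norm_eq_abs, abs_of_nonneg h2m]
    exact mul_le_mul_of_nonneg_left hqnorm h2m
  have t4 : ‖(ε ^ 3 * a) • s‖ = ε ^ 3 * (|a| * ‖s‖) := by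
    rw [norm_smul, Real.norm_eq_abs, abs_mul, abs_of_pos (pow_pos hε 3)]; ring
  have t5 : ‖(ε * a) • e‖ ≤ ε * |a| * (C * ε ^ 3) := by
    rw [norm_smul, Real.norm_eq_abs, abs_mul, abs_of_pos hε, mul_assoc, mul_assoc]
    exact mul_le_mul_of_nonneg_left
      (mul_le_mul_of_nonneg_left he (abs_nonneg a)) hε.le
  have tri : ‖(J' e - (1/m) • r - (1/(2*m)) • q - (ε^3*a) • s - (ε*a) • e)‖
      ≤ ‖J' e‖ + ‖(1/m) • r‖ + ‖(1/(2*m)) • q‖ + ‖(ε^3*a) • s‖ + ‖(ε*a) • e‖ := by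
    calc ‖(J' e - (1/m) • r - (1/(2*m)) • q - (ε^3*a) • s - (ε*a) • e)‖
        ≤ ‖J' e - (1/m) • r - (1/(2*m)) • q - (ε^3*a) • s‖ + ‖(ε*a) • e‖ :=
          norm_sub_le _ _
      _ ≤ ‖J' e - (1/m) • r - (1/(2*m)) • q‖ + ‖(ε^3*a) • s‖ + ‖(ε*a) • e‖ := by
          have := norm_sub_le (J' e - (1/m) • r - (1/(2*m)) • q) ((ε^3*a) • s)
          linarith
      _ ≤ ‖J' e - (1/m) • r‖ + ‖(1/(2*m)) • q‖ + ‖(ε^3*a) • s‖ + ‖(ε*a) • e‖ := by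
          have := norm_sub_le (J' e - (1/m) • r) ((1/(2*m)) • q)
          linarith
      _ ≤ ‖J' e‖ + ‖(1/m) • r‖ + ‖(1/(2*m)) • q‖ + ‖(ε^3*a) • s‖ + ‖(ε*a) • e‖ := by
          have := norm_sub_le (J' e) ((1/m) • r)
          linarith
  have hfin : ε * |a| * (C * ε ^ 3) ≤ |a| * C * ε ^ 3 := by
    nlinarith [mul_nonneg (mul_nonneg (mul_nonneg (abs_nonneg a) hC)
      (pow_pos hε 3).le) (sub_nonneg.mpr hε1)]
  calc ‖(J' e - (1/m) • r - (1/(2*m)) • q - (ε^3*a) • s - (ε*a) • e)‖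
      ≤ ‖J' e‖ + ‖(1/m) • r‖ + ‖(1/(2*m)) • q‖ + ‖(ε^3*a) • s‖ + ‖(ε*a) • e‖ := tri
    _ ≤ ‖J'‖ * (C * ε ^ 3) + (1/m) * (L * (D * ε) ^ 3)
        + (1/(2*m)) * (‖B‖ * ((C + ‖s‖) * (D + ‖p‖)) * ε ^ 3)
        + ε ^ 3 * (|a| * ‖s‖) + ε * |a| * (C * ε ^ 3) := by
        rw [← t4]; linarith
    _ ≤ (‖J'‖ * C + (1/m) * (L * D ^ 3)
        + (1/(2*m)) * (‖B‖ * ((C + ‖s‖) * (D + ‖p‖)))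
        + |a| * ‖s‖ + |a| * C) * ε ^ 3 := by
        have hh : (1/m) * (L * (D * ε) ^ 3) = (1/m) * (L * D ^ 3) * ε ^ 3 := by ring
        rw [hh]
        linarith [hfin]

end StmtAux

open Filter Topology Asymptotics

set_option maxHeartbeats 1600000 in


/-- Second-order pathwise expansion of MPGD iterates: for every fixed `k`,
`‖x_k^ε − (x̄_k + ε φ_k + ε² ψ_k)‖ = O(ε³)` as `ε → 0⁺`. -/
theorem stmt_10 {d : ℕ} (m : ℝ) (hm : 0 < m)
    (α₁ α₂ : ℝ) (hα₁ : α₁ ∈ Set.Ioo (1:ℝ) 2) (hα₂ : α₂ ∈ Set.Ioo (1:ℝ) 2)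
    (μ₀ : ℝ) (hμ₀ : 0 ≤ μ₀) (σ₀ : ℝ)
    (x₀ : EuclideanSpace ℝ (Fin d))
    (w₁ : ℕ → ℝ) (w₂ : ℕ → EuclideanSpace ℝ (Fin d))
    (hw₁ : ∃ B : ℝ, ∀ k, |w₁ k| ≤ B) (hw₂ : ∃ B : ℝ, ∀ k, ‖w₂ k‖ ≤ B)
    (R : EuclideanSpace ℝ (Fin d) → ℝ)
    -- `∇R` has Lipschitz continuous partial derivatives up to order three (inclusive):
    (hR : ContDiff ℝ 4 R)
    (hRLip : ∀ j : ℕ, 1 ≤ j → j ≤ 4 → ∃ L : NNReal, LipschitzWith L (iteratedFDeriv ℝ j R))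
    -- perturbed iterates
    (xε : ℝ → ℕ → EuclideanSpace ℝ (Fin d))
    (hxε0 : ∀ ε : ℝ, 0 < ε → xε ε 0 = x₀)
    (hxε : ∀ ε : ℝ, 0 < ε → ∀ k : ℕ,
      xε ε (k + 1) = xε ε k - (1 / m) • gradient R (xε ε k)
        - (ε * μ₀ * m ^ (-1 / α₁) * w₁ k) • xε ε k
        + (ε * σ₀ * m ^ (-1 / α₂)) • w₂ k)
    -- unperturbed GD iterates
    (xbar : ℕ → EuclideanSpace ℝ (Fin d))
    (hxbar0 : xbar 0 = x₀)
    (hxbar : ∀ k : ℕ, xbar (k + 1) = xbar k - (1 / m) • gradient R (xbar k))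
    -- Jacobians J_k = I − (1/m)∇²R(x̄_k)
    (J : ℕ → EuclideanSpace ℝ (Fin d) →L[ℝ] EuclideanSpace ℝ (Fin d))
    (hJ : ∀ k : ℕ, J k = ContinuousLinearMap.id ℝ (EuclideanSpace ℝ (Fin d))
      - (1 / m) • fderiv ℝ (gradient R) (xbar k))
    -- first-order process
    (φ : ℕ → EuclideanSpace ℝ (Fin d))
    (hφ0 : φ 0 = 0)
    (hφ : ∀ k : ℕ, φ (k + 1) = J k (φ k)
      - (μ₀ * m ^ (-1 / α₁) * w₁ k) • xbar k + (σ₀ * m ^ (-1 / α₂)) • w₂ k)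
    -- second-order process
    (ψ : ℕ → EuclideanSpace ℝ (Fin d))
    (hψ0 : ψ 0 = 0)
    (hψ : ∀ k : ℕ, ψ (k + 1) = J k (ψ k)
      - (1 / (2 * m)) • (∑ i : Fin d, ∑ j : Fin d, ((φ k) i * (φ k) j) •
          fderiv ℝ (fderiv ℝ (gradient R)) (xbar k)
            (EuclideanSpace.single i 1) (EuclideanSpace.single j 1))
      - (μ₀ * m ^ (-1 / α₁) * w₁ k) • φ k)
    (k : ℕ) :
    (fun ε : ℝ => xε ε k - (xbar k + ε • φ k + ε ^ 2 • ψ k)) =O[𝓝[>] 0]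
      fun ε : ℝ => ε ^ 3 := by
  obtain ⟨L₃, hL₃⟩ := hRLip 3 (by norm_num) (by norm_num)
  have hLipB : ∀ p q : EuclideanSpace ℝ (Fin d),
      ‖fderiv ℝ (fderiv ℝ (gradient R)) p - fderiv ℝ (fderiv ℝ (gradient R)) q‖
        ≤ (L₃ : ℝ) * ‖p - q‖ := lip_D2g hR hL₃
  have key : ∀ n : ℕ, ∃ C : ℝ, 0 ≤ C ∧ ∀ ε : ℝ, 0 < ε → ε ≤ 1 →
      ‖xε ε n - (xbar n + ε • φ n + ε ^ 2 • ψ n)‖ ≤ C * ε ^ 3 := by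
    intro n
    induction n with
    | zero =>
      refine ⟨0, le_refl 0, fun ε hε _ => ?_⟩
      simp [hxε0 ε hε, hxbar0, hφ0, hψ0]
    | succ k ih =>
      obtain ⟨C, hC0, hC⟩ := ih
      have h1m : (0:ℝ) ≤ 1 / m := by positivity
      have h2m : (0:ℝ) ≤ 1 / (2 * m) := by positivity
      refine ⟨‖J k‖ * C + (1/m) * ((L₃:ℝ) * (C + ‖φ k‖ + ‖ψ k‖) ^ 3)
        + (1/(2*m)) * (‖fderiv ℝ (fderiv ℝ (gradient R)) (xbar k)‖ * ((C + ‖ψ k‖) * ((C + ‖φ k‖ + ‖ψ k‖) + ‖φ k‖)))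
        + |μ₀ * m ^ (-1 / α₁) * w₁ k| * ‖ψ k‖ + |μ₀ * m ^ (-1 / α₁) * w₁ k| * C, ?_, ?_⟩
      · have hp := norm_nonneg (φ k); have hs := norm_nonneg (ψ k)
        have n1 : (0:ℝ) ≤ ‖J k‖ * C := mul_nonneg (norm_nonneg _) hC0
        have n2 : (0:ℝ) ≤ (1/m) * ((L₃:ℝ) * (C + ‖φ k‖ + ‖ψ k‖) ^ 3) :=
          mul_nonneg h1m (mul_nonneg L₃.coe_nonneg (pow_nonneg (by linarith) 3))
        have n3 : (0:ℝ) ≤ (1/(2*m)) * (‖fderiv ℝ (fderiv ℝ (gradient R)) (xbar k)‖ * ((C + ‖ψ k‖) * ((C + ‖φ k‖ + ‖ψ k‖) + ‖φ k‖))) :=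
          mul_nonneg h2m (mul_nonneg (by positivity)
            (mul_nonneg (by linarith) (by linarith)))
        have n4 : (0:ℝ) ≤ |μ₀ * m ^ (-1 / α₁) * w₁ k| * ‖ψ k‖ := mul_nonneg (abs_nonneg _) hs
        have n5 : (0:ℝ) ≤ |μ₀ * m ^ (-1 / α₁) * w₁ k| * C := mul_nonneg (abs_nonneg _) hC0
        linarith
      intro ε hε hε1
      have h1' : xε ε (k+1) = xε ε k - (1/m) • gradient R (xε ε k)
          - (ε * (μ₀ * m ^ (-1 / α₁) * w₁ k)) • xε ε k
          + (ε * (σ₀ * m ^ (-1 / α₂))) • w₂ k := by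
        rw [show ε * (μ₀ * m ^ (-1 / α₁) * w₁ k) = ε * μ₀ * m ^ (-1 / α₁) * w₁ k by ring,
          show ε * (σ₀ * m ^ (-1 / α₂)) = ε * σ₀ * m ^ (-1 / α₂) by ring]
        exact hxε ε hε k
      have h4' : ψ (k+1) = J k (ψ k)
          - (1/(2*m)) • ((fderiv ℝ (fderiv ℝ (gradient R)) (xbar k) (φ k)) (φ k))
          - (μ₀ * m ^ (-1 / α₁) * w₁ k) • φ k := by
        rw [← stmt10_sum_bilin (fderiv ℝ (fderiv ℝ (gradient R)) (xbar k)) (φ k)]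
        exact hψ k
      exact stmt10_step m hm (L₃:ℝ) C (μ₀ * m ^ (-1 / α₁) * w₁ k) (σ₀ * m ^ (-1 / α₂))
        ε L₃.coe_nonneg hC0 hε hε1 (J k)
        (fderiv ℝ (gradient R) (xbar k)) (fderiv ℝ (fderiv ℝ (gradient R)) (xbar k))
        (xbar k) (xbar (k+1)) (φ k) (φ (k+1)) (ψ k) (ψ (k+1)) (xε ε k) (xε ε (k+1))
        (w₂ k) (gradient R (xε ε k)) (gradient R (xbar k))
        (hJ k) h1' (hxbar k) (hφ k) h4'
        (taylor2 hR L₃.coe_nonneg hLipB (xbar k) (xε ε k)) (hC ε hε hε1)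
  obtain ⟨C, hC0, hC⟩ := key k
  rw [Asymptotics.isBigO_iff]
  refine ⟨C, ?_⟩
  filter_upwards [Ioo_mem_nhdsGT_of_mem (by norm_num : (0:ℝ) ∈ Set.Ico 0 1)] with ε hεm
  have := hC ε hεm.1 hεm.2.le
  simpa [Real.norm_eq_abs, abs_of_pos hεm.1, abs_of_pos (pow_pos hεm.1 3)] using this
end
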